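/- Under the Gaussian assumption with symmetric (real) S = VΛVᵀ, for i ≠ j the covariance of graph cross-periodogram entries vanishes: E((v_iᵀ x yᵀ v_i)(v_jᵀ x yᵀ v_j)) = (p_XY)_i (p_XY)_j, where x, y are zero-mean jointly Gaussian real vectors with Σ_XY = V diag(p_XY) Vᵀ, Σ_X = V diag(p_X) Vᵀ, Σ_Y = V diag(p_Y) Vᵀ. -/

import Mathlib

/-!
Write `x̂ = Vᵀ x` and `ŷ = Vᵀ y`. These are again jointly centered Gaussian and, because `Vᵀ V = 1`,
their covariance matrices are `diag pX`, `diag pXY` and `diag pY`. By Isserlis' theorem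
`E[x̂ᵢ ŷᵢ x̂ⱼ ŷⱼ]` is a sum over the three pairings of the four factors, and for `i ≠ j` only the
pairing `(x̂ᵢ ŷᵢ)(x̂ⱼ ŷⱼ)` has nonzero covariances. Isserlis' theorem for four variables follows by
polarization from `E[W⁴] = 3 E[W²]²` for every centered Gaussian linear combination `W`, and this
moment identity is read off from the derivatives at `0` of the moment generating function
`exp (v t² / 2)`.
-/

open MeasureTheory ProbabilityTheory Matrix

/-- A family of real random variables is jointly Gaussian and centered if every finite
linear combination of its coordinates is a centered Gaussian real random variable. -/
def IsCenteredGaussianFamily {Ω ι : Type*} [MeasureSpace Ω] (Z : Ω → ι → ℝ) : Prop :=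
  ∀ l : (ι → ℝ) →ₗ[ℝ] ℝ, ∃ σ2 : NNReal,
    Measure.map (fun ω => l (Z ω)) (volume : Measure Ω) = gaussianReal 0 σ2

open Real Polynomial
open scoped NNReal ENNReal

noncomputable def gaussianMgfDerivPoly (v : ℝ) : ℕ → ℝ[X]
  | 0 => 1
  | n + 1 => derivative (gaussianMgfDerivPoly v n) + C v * X * gaussianMgfDerivPoly v n

lemma iteratedDeriv_exp_half_mul_sq (v : ℝ) (n : ℕ) :
    iteratedDeriv n (fun t => rexp (v * t ^ 2 / 2))
      = fun t => (gaussianMgfDerivPoly v n).eval t * rexp (v * t ^ 2 / 2) := by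
  induction n with
  | zero => simp [gaussianMgfDerivPoly]
  | succ n ih =>
    rw [iteratedDeriv_succ, ih]
    ext t
    have hexp := ((hasDerivAt_pow 2 t).const_mul v |>.div_const 2).exp
    rw [(((gaussianMgfDerivPoly v n).hasDerivAt t).fun_mul hexp).deriv, gaussianMgfDerivPoly]
    simp only [Nat.cast_ofNat, Nat.add_one_sub_one, pow_one, eval_add, eval_mul, eval_C, eval_X]
    ring

lemma integral_pow_gaussianReal_zero (v : ℝ≥0) (n : ℕ) :
    ∫ x, x ^ n ∂gaussianReal 0 v = (gaussianMgfDerivPoly v n).eval 0 := by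
  have h := iteratedDeriv_mgf_zero (X := id) (μ := gaussianReal 0 v) (by simp) n
  simp only [mgf_id_gaussianReal, zero_mul, zero_add, iteratedDeriv_exp_half_mul_sq] at h
  simpa using h.symm

lemma integral_pow_four_gaussianReal_zero (v : ℝ≥0) :
    ∫ x, x ^ 4 ∂gaussianReal 0 v = 3 * (∫ x, x ^ 2 ∂gaussianReal 0 v) ^ 2 := by
  simp only [integral_pow_gaussianReal_zero, gaussianMgfDerivPoly, derivative_one, derivative_add,
    derivative_mul, derivative_C, derivative_X, derivative_zero, eval_add, eval_mul, eval_C, eval_X,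
    eval_one, eval_zero]
  ring

section MapEqGaussianReal

variable {Ω : Type*} [MeasurableSpace Ω] {P : Measure Ω} {W : Ω → ℝ} {v : ℝ≥0}

lemma memLp_of_map_eq_gaussianReal (hW : P.map W = gaussianReal 0 v) {p : ℝ≥0∞} (hp : p ≠ ∞) :
    MemLp W p P :=
  (memLp_map_measure_iff aestronglyMeasurable_id
    (aemeasurable_of_map_neZero (by rw [hW]; infer_instance))).1
    (hW ▸ memLp_id_gaussianReal' p hp)

lemma integrable_pow_four_of_map_eq_gaussianReal (hW : P.map W = gaussianReal 0 v) :
    Integrable (fun ω => W ω ^ 4) P := by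
  simpa [Even.pow_abs ⟨2, rfl⟩] using
    (memLp_of_map_eq_gaussianReal hW (p := 4) (by simp)).integrable_norm_pow (by norm_num)

lemma integral_pow_four_of_map_eq_gaussianReal (hW : P.map W = gaussianReal 0 v) :
    ∫ ω, W ω ^ 4 ∂P = 3 * (∫ ω, W ω ^ 2 ∂P) ^ 2 := by
  have hmeas : AEMeasurable W P := aemeasurable_of_map_neZero (by rw [hW]; infer_instance)
  have hpow (n : ℕ) : ∫ ω, W ω ^ n ∂P = ∫ x, x ^ n ∂gaussianReal 0 v := by
    rw [← hW, integral_map hmeas (by fun_prop)]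
  rw [hpow, hpow, integral_pow_four_gaussianReal_zero]

end MapEqGaussianReal

lemma integral_sum_mul_sum {Ω n : Type*} [MeasurableSpace Ω] {P : Measure Ω} [Fintype n]
    (f g : n → Ω → ℝ) (hfg : ∀ k l, Integrable (fun ω => f k ω * g l ω) P) (s t : n → ℝ) :
    ∫ ω, (∑ k, s k * f k ω) * (∑ l, t l * g l ω) ∂P
      = ∑ k, ∑ l, s k * t l * ∫ ω, f k ω * g l ω ∂P := by
  have hterm (k l : n) : Integrable (fun ω => s k * t l * (f k ω * g l ω)) P :=
    (hfg k l).const_mul _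
  have hexpand (ω : Ω) : (∑ k, s k * f k ω) * (∑ l, t l * g l ω)
      = ∑ k, ∑ l, s k * t l * (f k ω * g l ω) := by
    rw [Finset.sum_mul_sum]
    exact Finset.sum_congr rfl fun k _ => Finset.sum_congr rfl fun l _ => by ring
  simp_rw [hexpand, ← integral_const_mul]
  rw [integral_finsetSum _ fun k _ => integrable_finsetSum _ fun l _ => hterm k l]
  simp_rw [integral_finsetSum _ fun l _ => hterm _ l]

lemma integral_mulVec_mul_mulVec {Ω m n : Type*} [MeasurableSpace Ω] {P : Measure Ω} [Fintype n]
    {u w : Ω → n → ℝ} (huw : ∀ k l, Integrable (fun ω => u ω k * w ω l) P)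
    {S : Matrix n n ℝ} (hS : ∀ k l, ∫ ω, u ω k * w ω l ∂P = S k l)
    (A B : Matrix m n ℝ) (a b : m) :
    ∫ ω, (A *ᵥ u ω) a * (B *ᵥ w ω) b ∂P = (A * S * Bᵀ) a b := by
  simp only [mulVec, dotProduct]
  rw [integral_sum_mul_sum (fun k ω => u ω k) (fun l ω => w ω l) huw]
  simp only [hS, mul_apply, transpose_apply, Finset.sum_mul]
  rw [Finset.sum_comm]
  exact Finset.sum_congr rfl fun l _ => Finset.sum_congr rfl fun k _ => by ring

lemma integral_transpose_mulVec_mul_transpose_mulVec {Ω n : Type*} [MeasurableSpace Ω]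
    {P : Measure Ω} [Fintype n] [DecidableEq n] {V : Matrix n n ℝ} (hV : Vᵀ * V = 1)
    {u w : Ω → n → ℝ} (huw : ∀ k l, Integrable (fun ω => u ω k * w ω l) P) {p : n → ℝ}
    (hp : ∀ k l, ∫ ω, u ω k * w ω l ∂P = (V * diagonal p * Vᵀ) k l) (a b : n) :
    ∫ ω, (Vᵀ *ᵥ u ω) a * (Vᵀ *ᵥ w ω) b ∂P = diagonal p a b := by
  rw [integral_mulVec_mul_mulVec huw hp, transpose_transpose, Matrix.mul_assoc, Matrix.mul_assoc,
    hV, Matrix.mul_one, ← Matrix.mul_assoc, hV, Matrix.one_mul]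

/-- Sign vectors for polarizing `z ↦ z 0 * z 1 * z 2 * z 3`; the last sign is fixed because fourth
powers are even, which leaves `2³` vectors and the constant `4! * 2³ = 192`. -/
def polarizationSigns (ε : Bool × Bool × Bool) : Fin 4 → ℝ :=
  ![if ε.1 then 1 else -1, if ε.2.1 then 1 else -1, if ε.2.2 then 1 else -1, 1]

lemma mul_mul_mul_eq_sum_polarizationSigns (z : Fin 4 → ℝ) :
    z 0 * z 1 * z 2 * z 3
      = 1 / 192 * ∑ ε, (∏ k, polarizationSigns ε k) * (∑ k, polarizationSigns ε k * z k) ^ 4 := by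
  simp only [polarizationSigns, Fintype.sum_prod_type, Fintype.sum_bool, Fin.sum_univ_four,
    Fin.prod_univ_four, cons_val, ite_true, Bool.false_eq_true, ite_false]
  ring

lemma sum_polarizationSigns_mul_three_mul_sq (C : Fin 4 → Fin 4 → ℝ) (hC : ∀ k l, C k l = C l k) :
    1 / 192 * ∑ ε, (∏ k, polarizationSigns ε k)
        * (3 * (∑ k, ∑ l, polarizationSigns ε k * polarizationSigns ε l * C k l) ^ 2)
      = C 0 1 * C 2 3 + C 0 2 * C 1 3 + C 0 3 * C 1 2 := by
  simp only [polarizationSigns, Fintype.sum_prod_type, Fintype.sum_bool, Fin.sum_univ_four,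
    Fin.prod_univ_four, cons_val, ite_true, Bool.false_eq_true, ite_false]
  rw [hC 1 0, hC 2 0, hC 3 0, hC 2 1, hC 3 1, hC 3 2]
  ring

namespace IsCenteredGaussianFamily

variable {Ω ι κ : Type*} [MeasureSpace Ω] {Z : Ω → ι → ℝ}

lemma comp_linearMap (hZ : IsCenteredGaussianFamily Z) (L : (ι → ℝ) →ₗ[ℝ] κ → ℝ) :
    IsCenteredGaussianFamily (fun ω => L (Z ω)) :=
  fun l => hZ (l ∘ₗ L)

lemma memLp_apply (hZ : IsCenteredGaussianFamily Z) (l : (ι → ℝ) →ₗ[ℝ] ℝ) {p : ℝ≥0∞}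
    (hp : p ≠ ∞) : MemLp (fun ω => l (Z ω)) p :=
  memLp_of_map_eq_gaussianReal (hZ l).choose_spec hp

lemma integrable_mul (hZ : IsCenteredGaussianFamily Z) (a b : ι) :
    Integrable (fun ω => Z ω a * Z ω b) :=
  (hZ.memLp_apply (LinearMap.proj a) (p := 2) (by simp)).integrable_mul
    (hZ.memLp_apply (LinearMap.proj b) (p := 2) (by simp))

theorem integral_mul_mul_mul (hZ : IsCenteredGaussianFamily Z) (a b c d : ι) :
    ∫ ω, Z ω a * Z ω b * Z ω c * Z ω d
      = (∫ ω, Z ω a * Z ω b) * (∫ ω, Z ω c * Z ω d)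
        + (∫ ω, Z ω a * Z ω c) * (∫ ω, Z ω b * Z ω d)
        + (∫ ω, Z ω a * Z ω d) * (∫ ω, Z ω b * Z ω c) := by
  set e : Fin 4 → ι := ![a, b, c, d]
  set C : Fin 4 → Fin 4 → ℝ := fun k l => ∫ ω, Z ω (e k) * Z ω (e l)
  have hcomb (s : Fin 4 → ℝ) :
      ∃ v : ℝ≥0, volume.map (fun ω => ∑ k, s k * Z ω (e k)) = gaussianReal 0 v := by
    simpa [LinearMap.sum_apply] using hZ (∑ k, s k • (LinearMap.proj (e k) : (ι → ℝ) →ₗ[ℝ] ℝ))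
  have hsq (s : Fin 4 → ℝ) :
      ∫ ω, (∑ k, s k * Z ω (e k)) ^ 2 = ∑ k, ∑ l, s k * s l * C k l := by
    simp_rw [sq]
    exact integral_sum_mul_sum _ _ (fun k l => hZ.integrable_mul (e k) (e l)) s s
  have hfourth (s : Fin 4 → ℝ) :
      ∫ ω, (∑ k, s k * Z ω (e k)) ^ 4 = 3 * (∑ k, ∑ l, s k * s l * C k l) ^ 2 := by
    obtain ⟨v, hv⟩ := hcomb s
    rw [integral_pow_four_of_map_eq_gaussianReal hv, hsq]
  have hint (ε) : Integrable fun ω =>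
      (∏ k, polarizationSigns ε k) * (∑ k, polarizationSigns ε k * Z ω (e k)) ^ 4 :=
    (integrable_pow_four_of_map_eq_gaussianReal (hcomb _).choose_spec).const_mul _
  calc ∫ ω, Z ω a * Z ω b * Z ω c * Z ω d
      = ∫ ω, 1 / 192 * ∑ ε, (∏ k, polarizationSigns ε k)
          * (∑ k, polarizationSigns ε k * Z ω (e k)) ^ 4 := by
        simp_rw [← mul_mul_mul_eq_sum_polarizationSigns]
        rfl
    _ = 1 / 192 * ∑ ε, (∏ k, polarizationSigns ε k)
          * (3 * (∑ k, ∑ l, polarizationSigns ε k * polarizationSigns ε l * C k l) ^ 2) := by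
        rw [integral_const_mul, integral_finsetSum _ fun ε _ => hint ε]
        simp_rw [integral_const_mul, hfourth]
    _ = C 0 1 * C 2 3 + C 0 2 * C 1 3 + C 0 3 * C 1 2 :=
        sum_polarizationSigns_mul_three_mul_sq C fun k l => by simp only [C, mul_comm]

end IsCenteredGaussianFamily

theorem stmt14_general {N : ℕ} {Ω : Type*} [MeasureSpace Ω]
    (x y : Ω → Fin N → ℝ)
    (hGauss : IsCenteredGaussianFamily (fun ω => Sum.elim (x ω) (y ω)))
    (V : Matrix (Fin N) (Fin N) ℝ) (hV : Vᵀ * V = 1)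
    (pX pY pXY : Fin N → ℝ)
    (hX : ∀ i j, (∫ ω, x ω i * x ω j) = (V * Matrix.diagonal pX * Vᵀ) i j)
    (hY : ∀ i j, (∫ ω, y ω i * y ω j) = (V * Matrix.diagonal pY * Vᵀ) i j)
    (hXY : ∀ i j, (∫ ω, x ω i * y ω j) = (V * Matrix.diagonal pXY * Vᵀ) i j)
    (i j : Fin N) (hij : i ≠ j) :
    ∫ ω, ((∑ k, V k i * x ω k) * (∑ k, y ω k * V k i))
        * ((∑ k, V k j * x ω k) * (∑ k, y ω k * V k j))
      = pXY i * pXY j := by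
  set Z : Ω → Fin N ⊕ Fin N → ℝ := fun ω => Sum.elim (Vᵀ *ᵥ x ω) (Vᵀ *ᵥ y ω)
  have hZ : IsCenteredGaussianFamily Z := by
    simpa [Z, fromBlocks_mulVec, Function.comp_def] using
      hGauss.comp_linearMap (fromBlocks Vᵀ 0 0 Vᵀ).mulVecLin
  have hxx := integral_transpose_mulVec_mul_transpose_mulVec hV
    (fun k l => by simpa using hGauss.integrable_mul (.inl k) (.inl l)) hX
  have hyy := integral_transpose_mulVec_mul_transpose_mulVec hV
    (fun k l => by simpa using hGauss.integrable_mul (.inr k) (.inr l)) hY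
  have hxy := integral_transpose_mulVec_mul_transpose_mulVec hV
    (fun k l => by simpa using hGauss.integrable_mul (.inl k) (.inr l)) hXY
  have hyx (a b : Fin N) : ∫ ω, (Vᵀ *ᵥ y ω) a * (Vᵀ *ᵥ x ω) b = diagonal pXY b a := by
    simp_rw [mul_comm ((Vᵀ *ᵥ y _) a)]
    exact hxy b a
  have hcoord (u : Fin N → ℝ) (a : Fin N) : ∑ k, u k * V k a = (Vᵀ *ᵥ u) a := by
    simp [mulVec, dotProduct, mul_comm]
  calc _ = ∫ ω, Z ω (.inl i) * Z ω (.inr i) * Z ω (.inl j) * Z ω (.inr j) := by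
        simp only [Z, Sum.elim_inl, Sum.elim_inr, hcoord, mul_assoc]
        rfl
    _ = pXY i * pXY j := by
        rw [hZ.integral_mul_mul_mul]
        simp [Z, hxx, hyy, hxy, hyx, hij, hij.symm]

/-- Under the Gaussian assumption with real orthogonal `V`, for `i ≠ j` the
covariance of graph cross-periodogram entries vanishes:
`E((v_iᵀ x yᵀ v_i)(v_jᵀ x yᵀ v_j)) = (p_XY)_i (p_XY)_j`. -/
theorem stmt14 {N : ℕ} {Ω : Type*} [MeasureSpace Ω]
    [IsProbabilityMeasure (volume : Measure Ω)]
    (x y : Ω → Fin N → ℝ)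
    (hGauss : IsCenteredGaussianFamily (fun ω => Sum.elim (x ω) (y ω)))
    (V : Matrix (Fin N) (Fin N) ℝ) (hV : Vᵀ * V = 1) (hV' : V * Vᵀ = 1)
    (pX pY pXY : Fin N → ℝ)
    (hX : ∀ i j, (∫ ω, x ω i * x ω j) = (V * Matrix.diagonal pX * Vᵀ) i j)
    (hY : ∀ i j, (∫ ω, y ω i * y ω j) = (V * Matrix.diagonal pY * Vᵀ) i j)
    (hXY : ∀ i j, (∫ ω, x ω i * y ω j) = (V * Matrix.diagonal pXY * Vᵀ) i j)
    (i j : Fin N) (hij : i ≠ j) :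
    ∫ ω, ((∑ k, V k i * x ω k) * (∑ k, y ω k * V k i))
        * ((∑ k, V k j * x ω k) * (∑ k, y ω k * V k j))
      = pXY i * pXY j :=
  stmt14_general x y hGauss V hV pX pY pXY hX hY hXY i j hij
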